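/- Let R be a commutative ring and J₁, …, J_k ideals of R. Let φ : R[t₁^{±1}, …, t_k^{±1}] → R[t, t⁻¹] be the R-algebra homomorphism sending each tᵢ to t. Then the image under φ of the multivariable extended Rees algebra A(J₁, …, J_k) is exactly the extended Rees algebra A(J₁ + ⋯ + J_k) of the sum ideal, i.e., the set of f ∈ R[t, t⁻¹] whose coefficient of t^m lies in (J₁ + ⋯ + J_k)^{max(−m,0)} for every integer m. -/

import Mathlib

/-- The multivariable extended Rees algebra
`A(J₁, …, J_k) ⊆ R[t₁^{±1}, …, t_k^{±1}]` (the monoid algebra of `ℤ^k` over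
`R`), as a set. -/
def multiReesSet {R : Type*} [CommRing R] {k : ℕ} (Js : Fin k → Ideal R) :
    Set (AddMonoidAlgebra R (Fin k → ℤ)) :=
  {f | ∀ m : Fin k → ℤ, f.coeff m ∈ ∏ i, Js i ^ (-(m i)).toNat}

/-- The extended Rees algebra `A(I) ⊆ R[t, t⁻¹]` of a single ideal, as a set. -/
def extendedReesSet {R : Type*} [CommRing R] (I : Ideal R) :
    Set (LaurentPolynomial R) :=
  {f | ∀ m : ℤ, f.coeff m ∈ I ^ (-m).toNat}

/-- The `R`-algebra homomorphism `R[t₁^{±1}, …, t_k^{±1}] → R[t, t⁻¹]` sending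
each variable `tᵢ` to `t`; on exponents it is the total-degree map
`(m₁, …, m_k) ↦ m₁ + ⋯ + m_k`. -/
noncomputable def collapseVars (R : Type*) [CommRing R] (k : ℕ) :
    AddMonoidAlgebra R (Fin k → ℤ) →ₐ[R] LaurentPolynomial R :=
  AddMonoidAlgebra.mapDomainAlgHom R R
    (AddMonoidHom.mk' (fun m : Fin k → ℤ => ∑ i, m i)
      (by intro a b; simpa using Finset.sum_add_distrib))

/-!
Both algebras are cut out by coefficient conditions `f.coeff m ∈ w m` for a weight `w` with
`w 0 = ⊤` and `w a * w b ≤ w (a + b)`, so both are subalgebras. Collapsing the variables sends the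
weight `∏ Jᵢ ^ max(-mᵢ, 0)` into `(∑ Jᵢ) ^ max(-∑ mᵢ, 0)`, which gives one inclusion. Conversely the
image is a subalgebra containing `t` (the image of `t₁`) and `t⁻¹ x` for
`x ∈ Jᵢ` (the image of `tᵢ⁻¹ x`), hence `t⁻¹ x` for `x ∈ ∑ Jᵢ`. These generate the extended Rees
algebra, because `(∑ Jᵢ) ^ n` is spanned by products of `n` elements of `∑ Jᵢ`.
-/

namespace AddMonoidAlgebra

variable {R M N : Type*} [CommSemiring R]

def coeffSubmodule (w : M → Ideal R) : Submodule R R[M] where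
  carrier := {f | ∀ m, f.coeff m ∈ w m}
  zero_mem' _ := zero_mem _
  add_mem' hf hg m := add_mem (hf m) (hg m)
  smul_mem' r _ hf m := Submodule.smul_mem _ r (hf m)

theorem single_mem_coeffSubmodule {w : M → Ideal R} {m : M} {r : R} :
    single m r ∈ coeffSubmodule w ↔ r ∈ w m := by
  classical
  refine ⟨fun h => by simpa using h m, fun hr n => ?_⟩
  rw [coeff_single, Finsupp.single_apply]
  split_ifs with h
  · exact h ▸ hr
  · exact zero_mem _

theorem mapDomain_mem_coeffSubmodule {w : M → Ideal R} {w' : N → Ideal R} {φ : M → N}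
    (hw : ∀ m, w m ≤ w' (φ m)) {f : R[M]} (hf : f ∈ coeffSubmodule w) :
    mapDomain φ f ∈ coeffSubmodule w' := by
  rw [← sum_coeff_single f, mapDomain_sum]
  refine Submodule.finsuppSum_mem _ _ _ _ fun m _ => ?_
  rw [mapDomain_single, single_mem_coeffSubmodule]
  exact hw m (hf m)

variable [AddMonoid M]

noncomputable def coeffSubalgebra (w : M → Ideal R) (w_zero : w 0 = ⊤)
    (w_mul_le : ∀ a b, w a * w b ≤ w (a + b)) : Subalgebra R R[M] :=
  (coeffSubmodule w).toSubalgebra (single_mem_coeffSubmodule.2 (w_zero ▸ Submodule.mem_top))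
    fun f g hf hg m => by
      classical
      rw [coeff_mul]
      refine Submodule.finsuppSum_mem _ _ _ _ fun a _ =>
        Submodule.finsuppSum_mem _ _ _ _ fun b _ => ?_
      split_ifs with hab
      · exact hab ▸ w_mul_le a b (Ideal.mul_mem_mul (hf a) (hg b))
      · exact zero_mem _

end AddMonoidAlgebra

namespace Ideal

variable {R ι : Type*} [CommSemiring R] [Fintype ι]

theorem pow_neg_toNat_mul_le (I : Ideal R) (a b : ℤ) :
    I ^ (-a).toNat * I ^ (-b).toNat ≤ I ^ (-(a + b)).toNat := by
  rw [← pow_add]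
  exact Ideal.pow_le_pow_right (by omega)

theorem prod_pow_neg_toNat_le_sum_pow (Js : ι → Ideal R) (v : ι → ℤ) :
    ∏ i, Js i ^ (-(v i)).toNat ≤ (∑ i, Js i) ^ (-(∑ i, v i)).toNat := by
  calc ∏ i, Js i ^ (-(v i)).toNat
      ≤ ∏ i, (∑ j, Js j) ^ (-(v i)).toNat :=
        Finset.prod_le_prod' fun i _ =>
          Ideal.pow_right_mono (Finset.single_le_sum (fun j _ => bot_le) (Finset.mem_univ i)) _
    _ = (∑ j, Js j) ^ ∑ i, (-(v i)).toNat := Finset.prod_pow_eq_pow_sum _ _ _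
    _ ≤ (∑ i, Js i) ^ (-(∑ i, v i)).toNat := by
        refine Ideal.pow_le_pow_right (Int.toNat_le.2 ?_)
        push_cast
        rw [← Finset.sum_neg_distrib]
        exact Finset.sum_le_sum fun i _ => Int.self_le_toNat _

end Ideal

noncomputable def multiReesSubalgebra {R ι : Type*} [CommSemiring R] [Fintype ι]
    (Js : ι → Ideal R) : Subalgebra R (AddMonoidAlgebra R (ι → ℤ)) :=
  AddMonoidAlgebra.coeffSubalgebra (fun m => ∏ i, Js i ^ (-(m i)).toNat) (by simp)
    fun a b => by
      rw [← Finset.prod_mul_distrib]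
      exact Finset.prod_le_prod' fun i _ => (Js i).pow_neg_toNat_mul_le (a i) (b i)

section multiReesSubalgebra

variable {R ι : Type*} [CommSemiring R] [Fintype ι] (Js : ι → Ideal R)

open AddMonoidAlgebra

theorem single_mem_multiReesSubalgebra_iff {v : ι → ℤ} {r : R} :
    single v r ∈ multiReesSubalgebra Js ↔ r ∈ ∏ i, Js i ^ (-(v i)).toNat :=
  single_mem_coeffSubmodule

theorem single_mem_multiReesSubalgebra_of_nonneg {v : ι → ℤ} (hv : 0 ≤ v) (r : R) :
    single v r ∈ multiReesSubalgebra Js := by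
  rw [single_mem_multiReesSubalgebra_iff]
  simp [Int.toNat_eq_zero.2 (neg_nonpos.2 (hv _)), Ideal.top_pow]

theorem single_neg_single_mem_multiReesSubalgebra [DecidableEq ι] (i : ι) {x : R}
    (hx : x ∈ Js i) : single (-Pi.single i 1) x ∈ multiReesSubalgebra Js := by
  rw [single_mem_multiReesSubalgebra_iff,
    Finset.prod_eq_single i (fun j _ hj => by simp [hj]) (by simp)]
  simpa using hx

end multiReesSubalgebra

theorem coe_multiReesSubalgebra {R : Type*} [CommRing R] {k : ℕ} (Js : Fin k → Ideal R) :
    (multiReesSubalgebra Js : Set (AddMonoidAlgebra R (Fin k → ℤ))) = multiReesSet Js := rfl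

theorem collapseVars_single {R : Type*} [CommRing R] {k : ℕ} (v : Fin k → ℤ) (r : R) :
    collapseVars R k (AddMonoidAlgebra.single v r) = AddMonoidAlgebra.single (∑ i, v i) r :=
  AddMonoidAlgebra.mapDomain_single

theorem collapseVars_mem_extendedReesSet {R : Type*} [CommRing R] {k : ℕ}
    {Js : Fin k → Ideal R} {g : AddMonoidAlgebra R (Fin k → ℤ)} (hg : g ∈ multiReesSet Js) :
    collapseVars R k g ∈ extendedReesSet (∑ i, Js i) :=
  AddMonoidAlgebra.mapDomain_mem_coeffSubmodule (φ := fun v : Fin k → ℤ => ∑ i, v i)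
    (w' := fun m : ℤ => (∑ i, Js i) ^ (-m).toNat) (Ideal.prod_pow_neg_toNat_le_sum_pow Js) hg

namespace LaurentPolynomial

open AddMonoidAlgebra

theorem extendedReesSet_subset_of_T_mem {R : Type*} [CommRing R] {I : Ideal R}
    {S : Subalgebra R R[T;T⁻¹]} (hT : T 1 ∈ S) (hI : ∀ x ∈ I, single (-1) x ∈ S) :
    extendedReesSet I ⊆ S := by
  have single_neg_mem : ∀ n : ℕ, ∀ r ∈ I ^ n, single (-(n : ℤ)) r ∈ S := by
    intro n
    induction n with
    | zero => exact fun r _ => S.algebraMap_mem r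
    | succ n ih =>
      intro r hr
      rw [pow_succ] at hr
      refine Submodule.mul_induction_on hr (fun a ha b hb => ?_) fun x y hx hy => ?_
      · have hab := S.mul_mem (ih a ha) (hI b hb)
        rwa [single_mul_single, ← neg_add, ← Nat.cast_succ] at hab
      · rw [single_add]
        exact S.add_mem hx hy
  intro f hf
  rw [← sum_coeff_single f]
  refine Submodule.finsuppSum_mem R (Subalgebra.toSubmodule S) _ _ fun m _ => ?_
  obtain ⟨n, rfl | rfl⟩ := Int.eq_nat_or_neg m
  · rw [single_eq_C_mul_T, ← mul_one (n : ℤ), ← T_pow]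
    exact S.mul_mem (S.algebraMap_mem _) (S.pow_mem hT n)
  · exact single_neg_mem n _ (by simpa using hf (-n))

end LaurentPolynomial

/-- For `k ≥ 1`, the image under `tᵢ ↦ t` of the
multivariable extended Rees algebra `A(J₁, …, J_k)` is exactly the extended
Rees algebra `A(J₁ + ⋯ + J_k)` of the sum ideal. -/
theorem image_multiReesSet_eq_extendedReesSet_sum {R : Type*} [CommRing R]
    {k : ℕ} (hk : 0 < k) (Js : Fin k → Ideal R) :
    ⇑(collapseVars R k) '' multiReesSet Js = extendedReesSet (∑ i, Js i) := by
  set S := (multiReesSubalgebra Js).map (collapseVars R k)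
  have hS : ⇑(collapseVars R k) '' multiReesSet Js = S := by
    rw [Subalgebra.coe_map, coe_multiReesSubalgebra]
  refine subset_antisymm ?_ ?_
  · rintro _ ⟨g, hg, rfl⟩
    exact collapseVars_mem_extendedReesSet hg
  have hT : LaurentPolynomial.T 1 ∈ S :=
    Subalgebra.mem_map.2 ⟨_, single_mem_multiReesSubalgebra_of_nonneg Js
      (Pi.single_nonneg (i := ⟨0, hk⟩).2 zero_le_one) 1, by rw [collapseVars_single]; simp⟩
  have hJ : ∑ i, Js i ≤ (Subalgebra.toSubmodule S).comap (AddMonoidAlgebra.lsingle (-1)) := by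
    rw [Ideal.sum_eq_sup]
    exact Finset.sup_le fun i _ x hx =>
      Subalgebra.mem_map.2 ⟨_, single_neg_single_mem_multiReesSubalgebra Js i hx,
        by rw [collapseVars_single]; simp⟩
  rw [hS]
  exact LaurentPolynomial.extendedReesSet_subset_of_T_mem hT fun x hx => hJ hx
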